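/- arXiv:2012.14512 — 6 statements merged into one kernel-verified Lean document; each statement's English description precedes it below -/
import Mathlib

section
/- Let S be a finite nonempty set of points in ℝ^d and define the set of good points G = {x ∈ S : L(S, x) ≤ 3·L(S)}, where L(S, x) = Σ_{s∈S} ‖s − x‖² and L(S) is the cost with the mean of S as center. Then |G| ≥ |S|/2. -/
open scoped Classical

open Finset

/-!
Translating the centre from the mean `μ` to `x` changes the cost by exactly `|S| ‖x - μ‖²`
(the cross terms cancel because the deviations from the mean sum to zero), so `x` is bad
exactly when `|S| ‖x - μ‖² > 2 L(S)`. Summing over the bad points, whose values of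
`|S| ‖x - μ‖²` add up to at most `|S| L(S)`, a Markov-type count shows that at most half
of the points are bad. The count is kept strict so that it also covers `L(S) = 0`.
-/

theorem Finset.sum_sub_inv_card_smul_sum {E : Type*} [AddCommGroup E] [Module ℝ E]
    (S : Finset E) : ∑ s ∈ S, (s - (#S : ℝ)⁻¹ • ∑ x ∈ S, x) = 0 := by
  rcases S.eq_empty_or_nonempty with rfl | hS
  · simp
  have hcard : (#S : ℝ) ≠ 0 := by exact_mod_cast hS.card_pos.ne'
  rw [sum_sub_distrib, sum_const, ← Nat.cast_smul_eq_nsmul ℝ, smul_smul,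
    mul_inv_cancel₀ hcard, one_smul, sub_self]

theorem Finset.sum_norm_sub_sq_eq_add_card_mul {E : Type*} [NormedAddCommGroup E]
    [InnerProductSpace ℝ E] {S : Finset E} {μ : E} (hμ : ∑ s ∈ S, (s - μ) = 0) (x : E) :
    ∑ s ∈ S, ‖s - x‖ ^ 2 = ∑ s ∈ S, ‖s - μ‖ ^ 2 + #S * ‖x - μ‖ ^ 2 := by
  have hsplit (s : E) :
      ‖s - x‖ ^ 2 = ‖s - μ‖ ^ 2 + 2 * inner ℝ (s - μ) (μ - x) + ‖μ - x‖ ^ 2 := by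
    rw [← norm_add_sq_real, sub_add_sub_cancel]
  rw [sum_congr rfl fun s _ => hsplit s, sum_add_distrib, sum_add_distrib, ← mul_sum,
    ← sum_inner, hμ, inner_zero_left, sum_const, nsmul_eq_mul, norm_sub_rev μ x]
  ring

theorem Finset.card_filter_nsmul_lt_sum {ι R : Type*} [AddCommMonoid R] [PartialOrder R]
    [IsOrderedCancelAddMonoid R] {s : Finset ι} {f : ι → R} (hf : ∀ i ∈ s, 0 ≤ f i) (a : R)
    (hne : (s.filter (a < f ·)).Nonempty) :
    #(s.filter (a < f ·)) • a < ∑ i ∈ s, f i :=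
  calc #(s.filter (a < f ·)) • a
      = ∑ _i ∈ s.filter (a < f ·), a := by rw [sum_const]
    _ < ∑ i ∈ s.filter (a < f ·), f i :=
      sum_lt_sum_of_nonempty hne fun i hi => (mem_filter.mp hi).2
    _ ≤ ∑ i ∈ s, f i :=
      sum_le_sum_of_subset_of_nonneg (filter_subset _ _) fun i hi _ => hf i hi

theorem good_points_half_general {d : ℕ} (S : Finset (EuclideanSpace ℝ (Fin d)))
    (μ : EuclideanSpace ℝ (Fin d)) (hμ : μ = (S.card : ℝ)⁻¹ • ∑ x ∈ S, x)
    (G : Finset (EuclideanSpace ℝ (Fin d)))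
    (hG : G = S.filter fun x => ∑ s ∈ S, ‖s - x‖ ^ 2 ≤ 3 * ∑ s ∈ S, ‖s - μ‖ ^ 2) :
    (S.card : ℝ) / 2 ≤ G.card := by
  have hcost := sum_norm_sub_sq_eq_add_card_mul (hμ ▸ S.sum_sub_inv_card_smul_sum)
  set L := ∑ s ∈ S, ‖s - μ‖ ^ 2
  set B := S.filter fun x => 2 * L < #S * ‖x - μ‖ ^ 2
  have hsplit : #G + #B = #S := by
    rw [hG, ← card_filter_add_card_filter_not (s := S)
      fun x => ∑ s ∈ S, ‖s - x‖ ^ 2 ≤ 3 * L]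
    congr 2
    ext x
    simp only [B, mem_filter, hcost x, not_le]
    constructor <;> rintro ⟨hx, h⟩ <;> exact ⟨hx, by linarith⟩
  have hB : 2 * (#B : ℝ) ≤ #S := by
    rcases B.eq_empty_or_nonempty with hBe | hBne
    · simp [hBe]
    have hmarkov := card_filter_nsmul_lt_sum
      (fun x _ => mul_nonneg (Nat.cast_nonneg _) (sq_nonneg _)) (2 * L) hBne
    rw [← mul_sum, nsmul_eq_mul] at hmarkov
    have hL : 0 ≤ L := sum_nonneg fun s _ => sq_nonneg _
    have hpos : 0 < L * (#S - 2 * #B) := by linarith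
    linarith [pos_of_mul_pos_right hpos hL]
  have hsplit_real : (#S : ℝ) = #G + #B := by exact_mod_cast hsplit.symm
  linarith

/-- At least half of the points of a finite set `S` are "good", i.e. satisfy
`L(S, x) ≤ 3·L(S)` where `L(S)` is the cost with the mean of `S` as center. -/
theorem good_points_half {d : ℕ} (S : Finset (EuclideanSpace ℝ (Fin d))) (hS : S.Nonempty)
    (μ : EuclideanSpace ℝ (Fin d)) (hμ : μ = (S.card : ℝ)⁻¹ • ∑ x ∈ S, x)
    (G : Finset (EuclideanSpace ℝ (Fin d)))
    (hG : G = S.filter fun x => ∑ s ∈ S, ‖s - x‖ ^ 2 ≤ 3 * ∑ s ∈ S, ‖s - μ‖ ^ 2) :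
    (S.card : ℝ) / 2 ≤ G.card :=
  good_points_half_general S μ hμ G hG
end

section
/- (Turán's theorem, independent set form) Let H be a finite simple undirected graph on m vertices where vertex i has degree Δ_i. Then H has an independent set of size at least Σ_{i=1}^m 1/(Δ_i + 1). -/
/-- Turán's theorem, independent-set form: a finite simple graph has an
independent set of size at least `Σ_i 1/(Δ_i + 1)`. -/
theorem turan_indep {V : Type*} [Fintype V] [DecidableEq V]
    (H : SimpleGraph V) [DecidableRel H.Adj] :
    ∃ s : Finset V, (∀ x ∈ s, ∀ y ∈ s, ¬ H.Adj x y) ∧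
      ∑ i : V, (1 : ℝ) / (H.degree i + 1) ≤ s.card := by
  have key : ∀ s : Finset V, ∃ t, t ⊆ s ∧ (∀ x ∈ t, ∀ y ∈ t, ¬ H.Adj x y) ∧
      ∑ i ∈ s, (1 : ℝ) / ((s.filter (H.Adj i)).card + 1) ≤ t.card := by
    intro s
    induction s using Finset.strongInductionOn with
    | _ s ih =>
    rcases s.eq_empty_or_nonempty with rfl | hne
    · exact ⟨∅, by simp⟩
    obtain ⟨v, hv, hmin⟩ := s.exists_min_image (fun i => (s.filter (H.Adj i)).card) hne
    set d := (s.filter (H.Adj v)).card with hd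
    set N : Finset V := insert v (s.filter (H.Adj v)) with hN
    have hNs : N ⊆ s := Finset.insert_subset hv (Finset.filter_subset _ _)
    have hvN : v ∉ s.filter (H.Adj v) := by simp [H.irrefl]
    have hNcard : N.card = d + 1 := by rw [hN, Finset.card_insert_of_notMem hvN]
    set s' := s \ N with hs'
    have hss : s' ⊂ s := Finset.sdiff_ssubset hNs ⟨v, Finset.mem_insert_self _ _⟩
    obtain ⟨t', ht's, ht'ind, ht'sum⟩ := ih s' hss
    have hvt' : v ∉ t' := fun h => (Finset.mem_sdiff.mp (ht's h)).2 (Finset.mem_insert_self _ _)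
    refine ⟨insert v t', Finset.insert_subset hv (ht's.trans Finset.sdiff_subset), ?_, ?_⟩
    · intro x hx y hy
      rcases Finset.mem_insert.mp hx with hxv | hx
      · rcases Finset.mem_insert.mp hy with hyv | hy
        · rw [hxv, hyv]
          exact H.irrefl
        · rw [hxv]
          intro hadj
          exact (Finset.mem_sdiff.mp (ht's hy)).2
            (Finset.mem_insert_of_mem (Finset.mem_filter.mpr
              ⟨(Finset.mem_sdiff.mp (ht's hy)).1, hadj⟩))
      · rcases Finset.mem_insert.mp hy with hyv | hy
        · rw [hyv]
          intro hadj
          exact (Finset.mem_sdiff.mp (ht's hx)).2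
            (Finset.mem_insert_of_mem (Finset.mem_filter.mpr
              ⟨(Finset.mem_sdiff.mp (ht's hx)).1, hadj.symm⟩))
        · exact ht'ind x hx y hy
    · have hsplit : ∑ i ∈ s, (1 : ℝ) / ((s.filter (H.Adj i)).card + 1)
          = ∑ i ∈ s', (1 : ℝ) / ((s.filter (H.Adj i)).card + 1)
            + ∑ i ∈ N, (1 : ℝ) / ((s.filter (H.Adj i)).card + 1) :=
        (Finset.sum_sdiff hNs).symm
    -- bound on N part
      have hNbound : ∑ i ∈ N, (1 : ℝ) / ((s.filter (H.Adj i)).card + 1) ≤ 1 := by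
        have : ∀ i ∈ N, (1 : ℝ) / ((s.filter (H.Adj i)).card + 1) ≤ 1 / (d + 1) := by
          intro i hi
          apply one_div_le_one_div_of_le
          · positivity
          · have := hmin i (hNs hi)
            have : (d : ℝ) ≤ (s.filter (H.Adj i)).card := by exact_mod_cast this
            linarith
        calc ∑ i ∈ N, (1 : ℝ) / ((s.filter (H.Adj i)).card + 1)
            ≤ ∑ _i ∈ N, (1 : ℝ) / (d + 1) := Finset.sum_le_sum this
          _ = N.card * (1 / (d + 1)) := by rw [Finset.sum_const, nsmul_eq_mul]
          _ = 1 := by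
              rw [hNcard]
              push_cast
              field_simp
      have hs'bound : ∑ i ∈ s', (1 : ℝ) / ((s.filter (H.Adj i)).card + 1)
          ≤ ∑ i ∈ s', (1 : ℝ) / ((s'.filter (H.Adj i)).card + 1) := by
        apply Finset.sum_le_sum
        intro i _
        apply one_div_le_one_div_of_le
        · positivity
        · have : (s'.filter (H.Adj i)).card ≤ (s.filter (H.Adj i)).card :=
            Finset.card_le_card (Finset.filter_subset_filter _ Finset.sdiff_subset)
          have : ((s'.filter (H.Adj i)).card : ℝ) ≤ (s.filter (H.Adj i)).card := by
            exact_mod_cast this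
          linarith
      have hcard : ((insert v t').card : ℝ) = t'.card + 1 := by
        rw [Finset.card_insert_of_notMem hvt']; push_cast; ring
      rw [hsplit, hcard]
      linarith
  obtain ⟨t, _, htind, htsum⟩ := key Finset.univ
  refine ⟨t, htind, ?_⟩
  calc ∑ i : V, (1 : ℝ) / (H.degree i + 1)
      = ∑ i ∈ Finset.univ, (1 : ℝ) / ((Finset.univ.filter (H.Adj i)).card + 1) := by
        apply Finset.sum_congr rfl
        intro i _
        rw [← SimpleGraph.neighborFinset_eq_filter, SimpleGraph.card_neighborFinset_eq_degree]
    _ ≤ t.card := htsum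
end

section
/- Let G be a finite directed graph on n vertices where vertex t has out-degree d_t. Partition vertices into buckets by out-degree: S_0 = {j : d_j = 0} and S_i = {j : 2^{i-1} ≤ d_j < 2^i} for 1 ≤ i ≤ ⌈log₂ n⌉. Then if I denotes the maximum size of an independent set of the undirected graph underlying G, we have Σ_{j=1}^n 1/(d_j + 1) ≤ 4·|I|·(log₂ n + 1). -/
/-!
Bucket the vertices by `⌊log₂ (d_j + 1)⌋`, which takes at most `⌊log₂ n⌋ + 1` values since
`d_j ≤ n - 1`. In the bucket `2^i ≤ d_j + 1 < 2^(i+1)` every vertex has out-degree below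
`2^(i+1)`, so the underlying undirected graph on the bucket has average degree below `2^(i+2)`
and a greedy choice finds an independent set of at least `|S_i| / 2^(i+2)` of its vertices.
Hence `Σ_{j ∈ S_i} 1/(d_j + 1) ≤ |S_i| / 2^i ≤ 4|I|` for every bucket.
-/

open Finset

section

variable {α : Type*} [DecidableEq α] (A : α → Finset α)

/-- Independence in the undirected graph underlying the out-neighbourhoods `A`. -/
def IsIndepSet (s : Finset α) : Prop := ∀ x ∈ s, ∀ y ∈ s, y ∉ A x

variable {A}

lemma IsIndepSet.insert {J : Finset α} {x : α} (hJ : IsIndepSet A J) (hx : x ∉ A x)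
    (hxJ : ∀ y ∈ J, y ∉ A x ∧ x ∉ A y) : IsIndepSet A (insert x J) := by
  intro a ha b hb
  rcases mem_insert.mp ha with rfl | haJ <;> rcases mem_insert.mp hb with rfl | hbJ
  exacts [hx, (hxJ b hbJ).1, (hxJ a haJ).2, hJ a haJ b hbJ]

/-- Double counting: the in-degrees inside `S` sum to at most the out-degrees. -/
lemma exists_card_inNeighbors_le {S : Finset α} {D : ℕ} (hS : S.Nonempty)
    (hD : ∀ x ∈ S, #(A x) ≤ D) : ∃ x ∈ S, #{y ∈ S | x ∈ A y} ≤ D := by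
  refine exists_le_of_sum_le hS ?_
  calc ∑ x ∈ S, #{y ∈ S | x ∈ A y}
      = ∑ y ∈ S, #{x ∈ S | x ∈ A y} := by simp only [card_filter]; exact sum_comm
    _ ≤ ∑ _y ∈ S, D := sum_le_sum fun y hy =>
        (card_le_card fun _ hz => (mem_filter.mp hz).2).trans (hD y hy)

lemma exists_isIndepSet_subset (hirr : ∀ x, x ∉ A x) {D : ℕ} (S : Finset α)
    (hD : ∀ x ∈ S, #(A x) ≤ D) : ∃ J ⊆ S, IsIndepSet A J ∧ #S ≤ (2 * D + 1) * #J := by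
  induction S using Finset.strongInduction with
  | H S ih =>
  obtain rfl | hS := S.eq_empty_or_nonempty
  · exact ⟨∅, empty_subset _, by simp [IsIndepSet], by simp⟩
  obtain ⟨x, hxS, hx⟩ := exists_card_inNeighbors_le hS hD
  -- keep `x` and discard all its neighbours: at most `2D + 1` vertices leave `S`
  set R := insert x (A x ∪ {y ∈ S | x ∈ A y})
  have hR : #R ≤ 2 * D + 1 := by
    grw [card_insert_le, card_union_le, hD x hxS, hx]; omega
  have hxR : x ∈ R := mem_insert_self _ _
  obtain ⟨J, hJS, hJ, hJcard⟩ := ih (S \ R) (ssubset_iff_of_subset sdiff_subset |>.mpr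
    ⟨x, hxS, fun h => (mem_sdiff.mp h).2 hxR⟩) fun y hy => hD y (mem_sdiff.mp hy).1
  have hxJ : x ∉ J := fun h => (mem_sdiff.mp (hJS h)).2 hxR
  refine ⟨insert x J, insert_subset hxS (hJS.trans sdiff_subset), hJ.insert (hirr x) ?_, ?_⟩
  · intro y hy
    obtain ⟨hyS, hyR⟩ := mem_sdiff.mp (hJS hy)
    simp only [R, mem_insert, mem_union, mem_filter, not_or, not_and] at hyR
    exact ⟨hyR.2.1, hyR.2.2 hyS⟩
  · rw [card_insert_of_notMem hxJ]
    calc #S ≤ #(S \ R) + #R := card_le_card_sdiff_add_card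
      _ ≤ (2 * D + 1) * #J + (2 * D + 1) := by gcongr
      _ = (2 * D + 1) * (#J + 1) := by ring

lemma sum_one_div_card_succ_le_of_log_eq (hirr : ∀ x, x ∉ A x) {I : Finset α}
    (hImax : ∀ s, IsIndepSet A s → #s ≤ #I) (i : ℕ) (S : Finset α)
    (hS : ∀ x ∈ S, Nat.log 2 (#(A x) + 1) = i) :
    ∑ x ∈ S, (1 : ℝ) / (#(A x) + 1) ≤ 4 * #I := by
  have hlow (x) (hx : x ∈ S) : 2 ^ i ≤ #(A x) + 1 :=
    hS x hx ▸ Nat.pow_log_le_self 2 (Nat.succ_ne_zero _)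
  have hhigh (x) (hx : x ∈ S) : #(A x) + 1 < 2 ^ (i + 1) :=
    hS x hx ▸ Nat.lt_pow_succ_log_self Nat.one_lt_two _
  obtain ⟨J, -, hJ, hSJ⟩ := exists_isIndepSet_subset hirr (D := 2 ^ (i + 1) - 1) S
    fun x hx => by have := hhigh x hx; omega
  have hD : 2 * (2 ^ (i + 1) - 1) + 1 ≤ 2 ^ (i + 2) := by
    have := Nat.one_le_two_pow (n := i + 1)
    rw [pow_succ 2 (i + 1)]; omega
  have hSI : #S ≤ 2 ^ (i + 2) * #I := hSJ.trans (Nat.mul_le_mul hD (hImax J hJ))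
  calc ∑ x ∈ S, (1 : ℝ) / (#(A x) + 1)
      ≤ ∑ _x ∈ S, (1 : ℝ) / 2 ^ i :=
        sum_le_sum fun x hx =>
          one_div_le_one_div_of_le (by positivity) (by exact_mod_cast hlow x hx)
    _ = #S / 2 ^ i := by rw [sum_const, nsmul_eq_mul, mul_one_div]
    _ ≤ 2 ^ (i + 2) * #I / 2 ^ i := by gcongr; exact_mod_cast hSI
    _ = 4 * #I := by rw [pow_add]; field_simp; ring

end

theorem degree_sum_le_indep_general (n : ℕ)
    (A : Fin n → Finset (Fin n)) (hirr : ∀ t, t ∉ A t)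
    (I : Finset (Fin n))
    (hImax : ∀ s : Finset (Fin n), (∀ x ∈ s, ∀ y ∈ s, y ∉ A x) → s.card ≤ I.card) :
    ∑ j : Fin n, (1 : ℝ) / ((A j).card + 1) ≤ 4 * I.card * (Real.logb 2 n + 1) := by
  have hbucket (j : Fin n) : Nat.log 2 (#(A j) + 1) ∈ range (Nat.log 2 n + 1) := by
    have hdeg : #(A j) < n := by
      simpa using card_lt_card (ssubset_univ_iff.mpr fun h => hirr j (eq_univ_iff_forall.mp h j))
    exact mem_range_succ_iff.mpr (Nat.log_mono_right hdeg)
  rw [← sum_fiberwise_of_maps_to fun j _ => hbucket j]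
  calc ∑ i ∈ range (Nat.log 2 n + 1), ∑ j with Nat.log 2 (#(A j) + 1) = i, (1 : ℝ) / (#(A j) + 1)
      ≤ ∑ _i ∈ range (Nat.log 2 n + 1), 4 * (#I : ℝ) := sum_le_sum fun i _ =>
        sum_one_div_card_succ_le_of_log_eq hirr hImax i _ fun j hj => (mem_filter.mp hj).2
    _ = 4 * #I * (Nat.log 2 n + 1) := by rw [sum_const, card_range, nsmul_eq_mul]; push_cast; ring
    _ ≤ 4 * #I * (Real.logb 2 n + 1) := by gcongr; exact Real.natLog_le_logb n 2

/-- For a directed graph on `n` vertices with out-neighborhoods `A` and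
out-degrees `d_j = |A j|`, if `I` is a maximum independent set of the underlying
undirected graph, then `Σ_j 1/(d_j + 1) ≤ 4·|I|·(log₂ n + 1)`. -/
theorem degree_sum_le_indep (n : ℕ) (hn : 1 ≤ n)
    (A : Fin n → Finset (Fin n)) (hirr : ∀ t, t ∉ A t)
    (I : Finset (Fin n)) (hI : ∀ x ∈ I, ∀ y ∈ I, y ∉ A x)
    (hImax : ∀ s : Finset (Fin n), (∀ x ∈ s, ∀ y ∈ s, y ∉ A x) → s.card ≤ I.card) :
    ∑ j : Fin n, (1 : ℝ) / ((A j).card + 1) ≤ 4 * I.card * (Real.logb 2 n + 1) :=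
  degree_sum_le_indep_general n A hirr I hImax
end

section
/- Let x_1, …, x_n be an (α, k)-sequence in a metric space with α > 1 and n > k, and for m > 1 define d_m = min_{1 ≤ i ≤ m−1} d(x_i, x_m). Then for every m with k < m ≤ n, there exists an index i with 1 ≤ i ≤ k−1 such that d_m > α·d_{m−i}. -/
open scoped Classical

/-- `diamPart ℓ S` is the best-`ℓ`-diameter of `S`: the least `D ≥ 0` such that
`S` can be partitioned into `ℓ` parts each of diameter at most `D`. -/
noncomputable def diamPart {α : Type*} [MetricSpace α] (ℓ : ℕ) (S : Finset α) : ℝ :=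
  sInf {D : ℝ | 0 ≤ D ∧ ∃ f : α → Fin ℓ, ∀ x ∈ S, ∀ y ∈ S, f x = f y → dist x y ≤ D}

/-- `x 0, …, x (n-1)` is an `(a, k)`-sequence: every point is at distance more
than `a` times the best-`(k-1)`-diameter of its predecessors from each of them. -/
def IsAKSeq {α : Type*} [MetricSpace α] (a : ℝ) (k n : ℕ) (x : ℕ → α) : Prop :=
  ∀ j, 0 < j → j < n → ∀ i < j,
    a * diamPart (k - 1) ((Finset.range j).image x) < dist (x i) (x j)

/-- In an `(a,k)`-sequence, for every `m > k` (0-indexed: `m ≥ k`) there is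
`1 ≤ i ≤ k-1` with `d_m > a·d_{m-i}`, where `d_m` is the distance from `x m` to
its nearest predecessor. -/
theorem ak_seq_growth {α : Type*} [MetricSpace α] (a : ℝ) (ha : 1 < a) (k n : ℕ)
    (hk : 2 ≤ k) (x : ℕ → α) (hx : IsAKSeq a k n x) (d : ℕ → ℝ)
    (hd : ∀ m, 0 < m → m < n → IsLeast {r : ℝ | ∃ i < m, r = dist (x i) (x m)} (d m))
    (m : ℕ) (hm1 : k ≤ m) (hm2 : m < n) :
    ∃ i, 1 ≤ i ∧ i ≤ k - 1 ∧ a * d (m - i) < d m := by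
  classical
  have ha0 : (0:ℝ) < a := lt_trans one_pos ha
  have hm0 : 0 < m := by omega
  set S : Finset α := (Finset.range m).image x with hS
  set D0 := diamPart (k-1) S with hD0
  have hne : {D : ℝ | 0 ≤ D ∧ ∃ f : α → Fin (k-1),
      ∀ x ∈ S, ∀ y ∈ S, f x = f y → dist x y ≤ D}.Nonempty := by
    refine ⟨Metric.diam (S : Set α), Metric.diam_nonneg, ⟨fun _ => ⟨0, by omega⟩, ?_⟩⟩
    intro p hp q hq _
    exact Metric.dist_le_diam_of_mem (S.finite_toSet.isBounded) hp hq
  obtain ⟨hdm_mem, hdm_lb⟩ := hd m hm0 hm2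
  obtain ⟨i0, hi0, hdm_eq⟩ := hdm_mem
  have h1 : a * D0 < d m := by
    rw [hdm_eq]
    exact hx m hm0 hm2 i0 hi0
  have hTne : (Finset.Icc 1 (k-1)).Nonempty := ⟨1, by simp; omega⟩
  obtain ⟨j0, hj0mem, hj0min⟩ :=
    (Finset.Icc 1 (k-1)).exists_min_image (fun i => d (m - i)) hTne
  refine ⟨j0, (Finset.mem_Icc.mp hj0mem).1, (Finset.mem_Icc.mp hj0mem).2, ?_⟩
  have h2 : d (m - j0) ≤ D0 := by
    apply le_csInf hne
    rintro D ⟨hDnn, f, hf⟩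
    have key : ∀ p q, 1 ≤ p → p < q → q ≤ k →
        f (x (m - p)) = f (x (m - q)) → d (m - j0) ≤ D := by
      intro p q hp hpq hqk hfeq
      have hmp : m - p < m := by omega
      have hmq : m - q < m := by omega
      have hmem1 : x (m - p) ∈ S := Finset.mem_image_of_mem x (Finset.mem_range.mpr hmp)
      have hmem2 : x (m - q) ∈ S := Finset.mem_image_of_mem x (Finset.mem_range.mpr hmq)
      have hdist : dist (x (m - q)) (x (m - p)) ≤ D := hf _ hmem2 _ hmem1 hfeq.symm
      have hlt : m - q < m - p := by omega
      have hpos : 0 < m - p := by omega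
      have hlb := (hd (m - p) hpos (by omega)).2
      have hdp : d (m - p) ≤ dist (x (m - q)) (x (m - p)) :=
        hlb ⟨m - q, hlt, rfl⟩
      have hpmem : p ∈ Finset.Icc 1 (k-1) := Finset.mem_Icc.mpr ⟨hp, by omega⟩
      exact le_trans (hj0min p hpmem) (le_trans hdp hdist)
    have hcard : (Finset.univ : Finset (Fin (k-1))).card < (Finset.Icc 1 k).card := by
      simp [Nat.card_Icc]; omega
    obtain ⟨p, hp, q, hq, hpq, hfeq⟩ :=
      Finset.exists_ne_map_eq_of_card_lt_of_maps_to hcard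
        (f := fun i => f (x (m - i))) (fun _ _ => Finset.mem_univ _)
    simp only [Finset.mem_Icc] at hp hq
    rcases hpq.lt_or_gt with h | h
    · exact key p q hp.1 h hq.2 hfeq
    · exact key q p hq.1 h hp.2 hfeq.symm
  calc a * d (m - j0) ≤ a * D0 := mul_le_mul_of_nonneg_left h2 ha0.le
    _ < d m := h1
end

section
/- Let 1 < α < β and let x_1, …, x_n be an (α, k)-sequence in a metric space. Then there exists a subsequence of length at least ⌊n / (2k·log_α β)⌋ that is a (β, k)-sequence. -/
/-!
Any `k` consecutive terms `x p, …, x (p+k-1)` of an `(a, k)`-sequence are pairwise more than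
`a · diam_{k-1}(x 0, …, x (p-1))` apart, and `k - 1` parts cannot separate `k` points. Hence
the `(k-1)`-diameter of the prefixes grows by a factor `a` every `k` steps. Keeping every
`m`-th term, `m = k (s + 1)` with `s = ⌊log_a b⌋`, the prefix diameter is multiplied by
`a ^ (s + 1) ≥ b` between consecutive kept terms, which makes the kept terms a `(b, k)`-sequence.
-/

open scoped Classical

open Finset

section

variable {X : Type*} [MetricSpace X]

lemma diamPart_nonneg (ℓ : ℕ) (S : Finset X) : 0 ≤ diamPart ℓ S :=
  Real.sInf_nonneg fun _ hD => hD.1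

lemma nonempty_diamPart_bounds {ℓ : ℕ} (hℓ : 0 < ℓ) (S : Finset X) :
    {D : ℝ | 0 ≤ D ∧ ∃ f : X → Fin ℓ, ∀ x ∈ S, ∀ y ∈ S, f x = f y → dist x y ≤ D}.Nonempty :=
  ⟨Metric.diam (S : Set X), Metric.diam_nonneg, fun _ => ⟨0, hℓ⟩,
    fun _ hp _ hq _ => Metric.dist_le_diam_of_mem S.finite_toSet.isBounded hp hq⟩

lemma diamPart_mono {ℓ : ℕ} (hℓ : 0 < ℓ) {S T : Finset X} (h : S ⊆ T) :
    diamPart ℓ S ≤ diamPart ℓ T := by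
  refine csInf_le_csInf ⟨0, fun _ hD => hD.1⟩ (nonempty_diamPart_bounds hℓ T) ?_
  rintro D ⟨hD, f, hf⟩
  exact ⟨hD, f, fun p hp q hq => hf p (h hp) q (h hq)⟩

lemma le_diamPart_of_pairwise {ι : Type*} [Fintype ι] {ℓ : ℕ} (hℓ : 0 < ℓ)
    (hcard : ℓ < Fintype.card ι) {S : Finset X} {c : ℝ} (y : ι → X) (hy : ∀ i, y i ∈ S)
    (hsep : Pairwise fun i j => c < dist (y i) (y j)) : c ≤ diamPart ℓ S := by
  refine le_csInf (nonempty_diamPart_bounds hℓ S) ?_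
  rintro D ⟨-, f, hf⟩
  obtain ⟨i, j, hij, hfij⟩ :=
    Fintype.exists_ne_map_eq_of_card_lt (f ∘ y) (by simpa using hcard)
  exact (hsep hij).le.trans (hf _ (hy i) _ (hy j) hfij)

noncomputable def prefixDiam (ℓ : ℕ) (x : ℕ → X) (j : ℕ) : ℝ :=
  diamPart ℓ ((range j).image x)

lemma prefixDiam_mono {ℓ : ℕ} (hℓ : 0 < ℓ) (x : ℕ → X) : Monotone (prefixDiam ℓ x) :=
  fun _ _ h => diamPart_mono hℓ (image_subset_image (range_subset_range.mpr h))

namespace IsAKSeq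

variable {a : ℝ} {k n : ℕ} {x : ℕ → X}

lemma mul_prefixDiam_le_add (hx : IsAKSeq a k n x) (ha : 0 ≤ a) (hk : 2 ≤ k) {p : ℕ}
    (hp : p + k ≤ n) : a * prefixDiam (k - 1) x p ≤ prefixDiam (k - 1) x (p + k) := by
  have hsep : ∀ i j : Fin k, i < j → a * prefixDiam (k - 1) x p < dist (x (p + i)) (x (p + j)) :=
    fun i j hij => (mul_le_mul_of_nonneg_left (prefixDiam_mono (by omega) x (by omega)) ha).trans_lt
      (hx (p + j) (by omega) (by omega) (p + i) (by omega))
  refine le_diamPart_of_pairwise (by omega) (by simp; omega) (fun i : Fin k => x (p + i))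
    (fun i => mem_image_of_mem x (mem_range.mpr (by omega))) fun i j hij => ?_
  rcases hij.lt_or_gt with h | h
  · exact hsep i j h
  · rw [dist_comm]; exact hsep j i h

lemma pow_mul_prefixDiam_le (hx : IsAKSeq a k n x) (ha : 0 ≤ a) (hk : 2 ≤ k) {p : ℕ} :
    ∀ {s : ℕ}, p + k * s ≤ n → a ^ s * prefixDiam (k - 1) x p ≤ prefixDiam (k - 1) x (p + k * s)
  | 0, _ => by simp
  | s + 1, hs => by
    rw [mul_add_one, ← add_assoc] at hs ⊢
    calc a ^ (s + 1) * prefixDiam (k - 1) x p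
        = a * (a ^ s * prefixDiam (k - 1) x p) := by ring
      _ ≤ a * prefixDiam (k - 1) x (p + k * s) :=
        mul_le_mul_of_nonneg_left (pow_mul_prefixDiam_le hx ha hk (by omega)) ha
      _ ≤ prefixDiam (k - 1) x (p + k * s + k) := hx.mul_prefixDiam_le_add ha hk hs

theorem comp_mul (hx : IsAKSeq a k n x) (ha : 0 ≤ a) (hk : 2 ≤ k) {b : ℝ} (hb : 0 ≤ b)
    {s m : ℕ} (hm : k * s < m) (hba : b ≤ a ^ (s + 1)) :
    IsAKSeq b k (n / m) (x ∘ (· * m)) := by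
  intro j hj hjn i hij
  have hm0 : 0 < m := by omega
  obtain ⟨j, rfl⟩ : ∃ j', j = j' + 1 := ⟨j - 1, by omega⟩
  have hjm : (j + 1) * m < n :=
    (Nat.mul_lt_mul_of_pos_right hjn hm0).trans_le (Nat.div_mul_le_self n m)
  have hsub : (range (j + 1)).image (x ∘ (· * m)) ⊆ (range (j * m + 1)).image x := by
    rw [image_comp]
    refine image_subset_image fun l hl => ?_
    obtain ⟨i, hi, rfl⟩ := mem_image.mp hl
    exact mem_range.mpr (Nat.lt_succ_of_le (Nat.mul_le_mul_right m (by simpa using hi)))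
  have hlen : j * m + 1 + k * s ≤ (j + 1) * m := by rw [add_one_mul]; omega
  calc b * diamPart (k - 1) ((range (j + 1)).image (x ∘ (· * m)))
      ≤ b * prefixDiam (k - 1) x (j * m + 1) :=
        mul_le_mul_of_nonneg_left (diamPart_mono (by omega) hsub) hb
    _ ≤ a ^ (s + 1) * prefixDiam (k - 1) x (j * m + 1) :=
        mul_le_mul_of_nonneg_right hba (diamPart_nonneg _ _)
    _ = a * (a ^ s * prefixDiam (k - 1) x (j * m + 1)) := by ring
    _ ≤ a * prefixDiam (k - 1) x ((j + 1) * m) := by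
        gcongr
        exact (hx.pow_mul_prefixDiam_le ha hk (by omega)).trans
          (prefixDiam_mono (by omega) x hlen)
    _ < dist (x (i * m)) (x ((j + 1) * m)) :=
        hx _ (by positivity) hjm _ (Nat.mul_lt_mul_of_pos_right hij hm0)

end IsAKSeq

end

lemma floor_div_le_div_mul_floor_add_one (n : ℕ) {k : ℕ} (hk : 0 < k) {y : ℝ} (hy : 1 ≤ y) :
    ⌊(n : ℝ) / (2 * k * y)⌋₊ ≤ n / (k * (⌊y⌋₊ + 1)) := by
  have hfloor : (⌊y⌋₊ : ℝ) ≤ y := Nat.floor_le (by linarith)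
  calc ⌊(n : ℝ) / (2 * k * y)⌋₊ ≤ ⌊(n : ℝ) / (k * (⌊y⌋₊ + 1) : ℕ)⌋₊ := by
        refine Nat.floor_le_floor (div_le_div_of_nonneg_left n.cast_nonneg (by positivity) ?_)
        push_cast
        nlinarith [(Nat.cast_pos.mpr hk : (0 : ℝ) < k)]
    _ = n / (k * (⌊y⌋₊ + 1)) := by rw [Nat.floor_div_natCast, Nat.floor_natCast]

/-- Any `(a,k)`-sequence of length `n` contains a `(b,k)`-subsequence of length
at least `⌊n / (2k·log_a b)⌋`, for `1 < a < b`. -/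
theorem ak_seq_subsequence {α : Type*} [MetricSpace α] (a b : ℝ) (ha : 1 < a) (hab : a < b)
    (k n : ℕ) (hk : 2 ≤ k) (x : ℕ → α) (hx : IsAKSeq a k n x) :
    ∃ (L : ℕ) (g : ℕ → ℕ), StrictMono g ∧ (∀ i < L, g i < n) ∧
      Nat.floor ((n : ℝ) / (2 * k * Real.logb a b)) ≤ L ∧
      IsAKSeq b k L (x ∘ g) := by
  have hb : 0 < b := by linarith
  have hlog : 1 ≤ Real.logb a b := (Real.le_logb_iff_rpow_le ha hb).2 (by simpa using hab.le)
  set s := ⌊Real.logb a b⌋₊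
  have hba : b ≤ a ^ (s + 1) := by
    rw [← Real.rpow_natCast, ← Real.logb_le_iff_le_rpow ha hb]
    exact_mod_cast (Nat.lt_floor_add_one _).le
  have hm : 0 < k * (s + 1) := by positivity
  refine ⟨n / (k * (s + 1)), (· * (k * (s + 1))), strictMono_mul_right_of_pos hm,
    fun i hi => (Nat.mul_lt_mul_of_pos_right hi hm).trans_le (Nat.div_mul_le_self _ _),
    floor_div_le_div_mul_floor_add_one n (by omega) hlog,
    hx.comp_mul (by linarith) hk hb.le (Nat.mul_lt_mul_of_pos_left s.lt_succ_self (by omega)) hba⟩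
end

section
/- Let c_1, …, c_n > 0 and suppose a directed graph G on {1, …, n} has vertex t with out-degree d_t ≤ 2c_t − 1 for each t, and let I be a maximum independent set of the underlying undirected graph. Then Σ_{t=1}^n 1/c_t ≤ 2·Σ_{t=1}^n 1/(d_t + 1) ≤ 8·|I|·(log₂ n + 1). -/
open Finset

lemma indep_bound {n : ℕ} (A : Fin n → Finset (Fin n)) (hirr : ∀ t, t ∉ A t) (D : ℕ) :
    ∀ S : Finset (Fin n), (∀ t ∈ S, (A t).card ≤ D) →
      ∃ J : Finset (Fin n), J ⊆ S ∧ (∀ x ∈ J, ∀ y ∈ J, y ∉ A x) ∧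
        S.card ≤ (2 * D + 1) * J.card := by
  intro S
  induction S using Finset.strongInduction with
  | _ S ih =>
    intro hS
    rcases S.eq_empty_or_nonempty with rfl | hne
    · exact ⟨∅, by simp⟩
    set N : Fin n → Finset (Fin n) := fun v => S.filter (fun u => u ∈ A v ∨ v ∈ A u) with hN
    have hsum : ∑ v ∈ S, (N v).card ≤ ∑ v ∈ S, 2 * D := by
      have h1 : ∀ v ∈ S, (N v).card ≤ (S.filter (· ∈ A v)).card
          + (S.filter (fun u => v ∈ A u)).card := by
        intro v _
        calc (N v).card = (S.filter (· ∈ A v) ∪ S.filter (fun u => v ∈ A u)).card := by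
              rw [hN]; simp [Finset.filter_or]
          _ ≤ _ := Finset.card_union_le _ _
      have h2 : ∀ v ∈ S, (S.filter (· ∈ A v)).card ≤ D := by
        intro v hv
        exact le_trans (Finset.card_le_card (fun u hu => (Finset.mem_filter.1 hu).2)) (hS v hv)
      have h3 : ∑ v ∈ S, (S.filter (fun u => v ∈ A u)).card ≤ ∑ v ∈ S, D := by
        have hswap : ∑ v ∈ S, (S.filter (fun u => v ∈ A u)).card
            = ∑ u ∈ S, (S.filter (fun v => v ∈ A u)).card := by
          simp_rw [Finset.card_filter]
          exact Finset.sum_comm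
        rw [hswap]
        refine Finset.sum_le_sum (fun u hu => ?_)
        exact le_trans (Finset.card_le_card (fun v hv => (Finset.mem_filter.1 hv).2)) (hS u hu)
      calc ∑ v ∈ S, (N v).card
          ≤ ∑ v ∈ S, ((S.filter (· ∈ A v)).card + (S.filter (fun u => v ∈ A u)).card) :=
            Finset.sum_le_sum h1
        _ = ∑ v ∈ S, (S.filter (· ∈ A v)).card + ∑ v ∈ S, (S.filter (fun u => v ∈ A u)).card :=
            Finset.sum_add_distrib
        _ ≤ ∑ v ∈ S, D + ∑ v ∈ S, D := by
            exact add_le_add (Finset.sum_le_sum h2) h3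
        _ = ∑ v ∈ S, 2 * D := by rw [← Finset.sum_add_distrib]; ring_nf
    obtain ⟨v, hv, hvdeg⟩ := Finset.exists_le_of_sum_le hne hsum
    set X : Finset (Fin n) := insert v (N v) with hX
    have hXsub : X ⊆ S := by
      rw [hX]
      exact Finset.insert_subset hv (Finset.filter_subset _ _)
    have hXcard : X.card ≤ 2 * D + 1 := by
      calc X.card ≤ (N v).card + 1 := Finset.card_insert_le _ _
        _ ≤ 2 * D + 1 := by omega
    have hssub : S \ X ⊂ S := Finset.sdiff_ssubset hXsub ⟨v, Finset.mem_insert_self _ _⟩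
    obtain ⟨J', hJ'sub, hJ'ind, hJ'card⟩ := ih (S \ X) hssub
      (fun t ht => hS t (Finset.mem_sdiff.1 ht).1)
    have hvJ' : v ∉ J' := fun h => (Finset.mem_sdiff.1 (hJ'sub h)).2 (Finset.mem_insert_self _ _)
    refine ⟨insert v J', ?_, ?_, ?_⟩
    · exact Finset.insert_subset hv (hJ'sub.trans Finset.sdiff_subset)
    · intro x hx y hy
      have key : ∀ w ∈ J', w ∉ A v ∧ v ∉ A w := by
        intro w hw
        have hwS' := Finset.mem_sdiff.1 (hJ'sub hw)
        have hwN : w ∉ N v := fun h => hwS'.2 (Finset.mem_insert_of_mem h)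
        constructor
        · intro hwA; exact hwN (Finset.mem_filter.2 ⟨hwS'.1, Or.inl hwA⟩)
        · intro hvA; exact hwN (Finset.mem_filter.2 ⟨hwS'.1, Or.inr hvA⟩)
      rcases Finset.mem_insert.1 hx with rfl | hx' <;>
        rcases Finset.mem_insert.1 hy with rfl | hy'
      · exact hirr _
      · exact (key y hy').1
      · exact (key x hx').2
      · exact hJ'ind x hx' y hy'
    · have hc1 : S.card ≤ (S \ X).card + X.card := Finset.card_le_card_sdiff_add_card
      have hc2 : (insert v J').card = J'.card + 1 := Finset.card_insert_of_notMem hvJ'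
      calc S.card ≤ (2 * D + 1) * J'.card + (2 * D + 1) := by omega
        _ = (2 * D + 1) * (insert v J').card := by rw [hc2]; ring

/-- Combining the out-degree bound `d_t ≤ 2c_t − 1` with the Turán-based
independent set bound: `Σ 1/c_t ≤ 2·Σ 1/(d_t+1) ≤ 8·|I|·(log₂ n + 1)`,
where `I` is a maximum independent set of the underlying undirected graph. -/
theorem center_complexity_bound (n : ℕ) (hn : 1 ≤ n)
    (c : Fin n → ℝ) (hc : ∀ t, 0 < c t)
    (A : Fin n → Finset (Fin n)) (hirr : ∀ t, t ∉ A t)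
    (hdeg : ∀ t, ((A t).card : ℝ) ≤ 2 * c t - 1)
    (I : Finset (Fin n)) (hI : ∀ x ∈ I, ∀ y ∈ I, y ∉ A x)
    (hImax : ∀ s : Finset (Fin n), (∀ x ∈ s, ∀ y ∈ s, y ∉ A x) → s.card ≤ I.card) :
    (∑ t, 1 / c t) ≤ 2 * ∑ t, (1 : ℝ) / ((A t).card + 1) ∧
      2 * (∑ t, (1 : ℝ) / ((A t).card + 1)) ≤ 8 * I.card * (Real.logb 2 n + 1) := by
  constructor
  · rw [Finset.mul_sum]
    refine Finset.sum_le_sum (fun t _ => ?_)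
    have h1 : ((A t).card : ℝ) + 1 ≤ 2 * c t := by have := hdeg t; linarith
    have h2 : (0:ℝ) < (A t).card + 1 := by positivity
    rw [mul_one_div, div_le_div_iff₀ (hc t) h2]
    linarith
  · -- bucket argument
    set K : ℕ := Nat.log 2 n + 1 with hK
    have hmaps : ∀ t : Fin n, t ∈ (Finset.univ : Finset (Fin n)) →
        Nat.log 2 ((A t).card + 1) ∈ Finset.range K := by
      intro t _
      have hAle : (A t).card + 1 ≤ n := by
        have : A t ⊆ Finset.univ.erase t := fun u hu => by
          refine Finset.mem_erase.2 ⟨?_, Finset.mem_univ u⟩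
          rintro rfl; exact hirr _ hu
        have h := Finset.card_le_card this
        rw [Finset.card_erase_of_mem (Finset.mem_univ t), Finset.card_univ, Fintype.card_fin] at h
        omega
      exact Finset.mem_range.2 (by
        have := Nat.log_mono_right (b := 2) hAle
        omega)
    have hsplit := Finset.sum_fiberwise_of_maps_to hmaps
      (fun t => (1 : ℝ) / ((A t).card + 1))
    rw [← hsplit]
    have hbucket : ∀ j ∈ Finset.range K,
        ∑ t ∈ Finset.univ.filter (fun t => Nat.log 2 ((A t).card + 1) = j),
          (1 : ℝ) / ((A t).card + 1) ≤ 4 * I.card := by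
      intro j _
      set B := Finset.univ.filter (fun t => Nat.log 2 ((A t).card + 1) = j) with hB
      have hpow2 : 2 ≤ 2 ^ (j + 1) := by
        calc (2:ℕ) = 2 ^ 1 := by norm_num
          _ ≤ 2 ^ (j + 1) := Nat.pow_le_pow_right (by norm_num) (by omega)
      have hBdeg : ∀ t ∈ B, (A t).card ≤ 2 ^ (j + 1) - 2 := by
        intro t ht
        have hj : Nat.log 2 ((A t).card + 1) = j := (Finset.mem_filter.1 ht).2
        have := Nat.lt_pow_succ_log_self (by norm_num : 1 < 2) ((A t).card + 1)
        rw [hj] at this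
        omega
      obtain ⟨J, hJsub, hJind, hJcard⟩ := indep_bound A hirr (2 ^ (j + 1) - 2) B hBdeg
      have hJI : J.card ≤ I.card := hImax J hJind
      have hBcard : B.card ≤ 2 ^ (j + 2) * I.card := by
        have h1 : 2 * (2 ^ (j + 1) - 2) + 1 ≤ 2 ^ (j + 2) := by
          have : (2:ℕ) ^ (j + 2) = 2 * 2 ^ (j + 1) := by ring
          omega
        calc B.card ≤ (2 * (2 ^ (j + 1) - 2) + 1) * J.card := hJcard
          _ ≤ 2 ^ (j + 2) * I.card := Nat.mul_le_mul h1 hJI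
      have hterm : ∀ t ∈ B, (1 : ℝ) / ((A t).card + 1) ≤ 1 / 2 ^ j := by
        intro t ht
        have hj : Nat.log 2 ((A t).card + 1) = j := (Finset.mem_filter.1 ht).2
        have hle : (2:ℕ) ^ j ≤ (A t).card + 1 := by
          rw [← hj]; exact Nat.pow_log_le_self 2 (by omega)
        have hle' : (2:ℝ) ^ j ≤ ((A t).card : ℝ) + 1 := by
          exact_mod_cast hle
        exact one_div_le_one_div_of_le (by positivity) hle'
      calc ∑ t ∈ B, (1 : ℝ) / ((A t).card + 1) ≤ ∑ t ∈ B, (1:ℝ) / 2 ^ j :=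
            Finset.sum_le_sum hterm
        _ = B.card * (1 / 2 ^ j) := by rw [Finset.sum_const, nsmul_eq_mul]
        _ ≤ (2 ^ (j + 2) * I.card : ℕ) * (1 / 2 ^ j) := by
            refine mul_le_mul_of_nonneg_right ?_ (by positivity)
            exact_mod_cast hBcard
        _ = 4 * I.card := by
            push_cast
            rw [pow_add]
            field_simp
            ring
    have htotal : ∑ j ∈ Finset.range K,
        ∑ t ∈ Finset.univ.filter (fun t => Nat.log 2 ((A t).card + 1) = j),
          (1 : ℝ) / ((A t).card + 1) ≤ K * (4 * I.card) := by
      calc _ ≤ ∑ _j ∈ Finset.range K, (4 * I.card : ℝ) := Finset.sum_le_sum hbucket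
        _ = K * (4 * I.card) := by rw [Finset.sum_const, nsmul_eq_mul, Finset.card_range]
    have hlog : (Nat.log 2 n : ℝ) ≤ Real.logb 2 n := Real.natLog_le_logb n 2
    have hKle : (K : ℝ) ≤ Real.logb 2 n + 1 := by
      rw [hK]; push_cast; linarith
    have hI0 : (0:ℝ) ≤ I.card := Nat.cast_nonneg _
    calc 2 * (∑ j ∈ Finset.range K,
          ∑ t ∈ Finset.univ.filter (fun t => Nat.log 2 ((A t).card + 1) = j),
            (1 : ℝ) / ((A t).card + 1)) ≤ 2 * (K * (4 * I.card)) := by linarith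
      _ = 8 * I.card * (K : ℝ) := by ring
      _ ≤ 8 * I.card * (Real.logb 2 n + 1) := by
          exact mul_le_mul_of_nonneg_left hKle (by positivity)
end
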